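/- arXiv:math/0207049 — 4 statements merged into one kernel-verified Lean document; each statement's English description precedes it below -/
import Mathlib

section
/- Let g : [t₁, T) → ℝ be positive and differentiable, ψ : [t₁, T) → ℝ continuous, H : [t₁, T) → ℝ continuous with H(t) ≥ ε₀ > 0 for all t, and suppose g'(t) = -2·exp(ψ(t))·H(t)·g(t) for all t. Then for every T' ∈ [t₁, T), ∫_{t₁}^{T'} exp(ψ(t))·√(g(t)) dt ≤ (1/ε₀)·√(g(t₁)). -/
/-! By the evolution equation, `√g` decays at rate `e^ψ H √g ≥ ε₀ e^ψ √g`, so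
`ε₀ ∫_{t₁}^{T'} e^ψ √g ≤ √g(t₁) - √g(T') ≤ √g(t₁)`. -/

open Real MeasureTheory Set

theorem HasDerivAt.sqrt_of_eq_neg_two_mul {g : ℝ → ℝ} {c t : ℝ}
    (hg : HasDerivAt g (-2 * c * g t) t) (hgt : 0 < g t) :
    HasDerivAt (fun s => √(g s)) (-(c * √(g t))) t := by
  convert hg.sqrt hgt.ne' using 1
  rw [eq_div_iff (by positivity)]
  linear_combination (-2 * c) * mul_self_sqrt hgt.le

theorem integral_le_div_of_mul_le_neg_deriv {f u u' : ℝ → ℝ} {a b ε : ℝ} (hab : a ≤ b)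
    (hε : 0 < ε) (hf : ContinuousOn f (Icc a b)) (hu : ∀ t ∈ Icc a b, HasDerivAt u (u' t) t)
    (hfu : ∀ t ∈ Icc a b, ε * f t ≤ -u' t) (hub : 0 ≤ u b) :
    ∫ t in a..b, f t ≤ u a / ε := by
  have hdecay : ∫ t in a..b, ε * f t ≤ -u b - -u a :=
    intervalIntegral.integral_le_sub_of_hasDeriv_right_of_le hab
      (fun t ht => (hu t ht).neg.continuousAt.continuousWithinAt)
      (fun t ht => (hu t (Ioo_subset_Icc_self ht)).neg.hasDerivWithinAt)
      ((hf.const_smul ε).integrableOn_Icc) (fun t ht => hfu t (Ioo_subset_Icc_self ht))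
  rw [intervalIntegral.integral_const_mul] at hdecay
  rw [le_div_iff₀ hε]
  linarith

theorem volume_estimate_pointwise_general
    (t₁ T ε₀ : ℝ) (g ψ H : ℝ → ℝ)
    (hgpos : ∀ t ∈ Ico t₁ T, 0 < g t)
    (hψ : ContinuousOn ψ (Ico t₁ T))
    (hε : 0 < ε₀)
    (hHε : ∀ t ∈ Ico t₁ T, ε₀ ≤ H t)
    (hg' : ∀ t ∈ Ico t₁ T, HasDerivAt g (-2 * Real.exp (ψ t) * H t * g t) t) :
    ∀ T' ∈ Ico t₁ T,
      ∫ t in t₁..T', Real.exp (ψ t) * Real.sqrt (g t) ≤ (1 / ε₀) * Real.sqrt (g t₁) := by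
  rintro T' ⟨hT₁, hT'⟩
  have hsub : Icc t₁ T' ⊆ Ico t₁ T := Icc_subset_Ico_right hT'
  have hg : ContinuousOn g (Icc t₁ T') := fun t ht =>
    (hg' t (hsub ht)).continuousAt.continuousWithinAt
  rw [one_div_mul_eq_div]
  refine integral_le_div_of_mul_le_neg_deriv hT₁ hε ((hψ.mono hsub).rexp.mul hg.sqrt)
    (fun t ht => HasDerivAt.sqrt_of_eq_neg_two_mul (c := rexp (ψ t) * H t)
      ((hg' t (hsub ht)).congr_deriv (by ring)) (hgpos t (hsub ht)))
    (fun t ht => ?_) (sqrt_nonneg _)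
  calc ε₀ * (rexp (ψ t) * √(g t))
      ≤ H t * (rexp (ψ t) * √(g t)) := by gcongr; exact hHε t (hsub ht)
    _ = -(-(rexp (ψ t) * H t * √(g t))) := by ring

theorem volume_estimate_pointwise
    (t₁ T ε₀ : ℝ) (g ψ H : ℝ → ℝ)
    (hT : t₁ < T)
    (hgpos : ∀ t ∈ Ico t₁ T, 0 < g t)
    (hψ : ContinuousOn ψ (Ico t₁ T))
    (hH : ContinuousOn H (Ico t₁ T))
    (hε : 0 < ε₀)
    (hHε : ∀ t ∈ Ico t₁ T, ε₀ ≤ H t)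
    (hg' : ∀ t ∈ Ico t₁ T, HasDerivAt g (-2 * Real.exp (ψ t) * H t * g t) t) :
    ∀ T' ∈ Ico t₁ T,
      ∫ t in t₁..T', Real.exp (ψ t) * Real.sqrt (g t) ≤ (1 / ε₀) * Real.sqrt (g t₁) :=
  volume_estimate_pointwise_general t₁ T ε₀ g ψ H hgpos hψ hε hHε hg'
end

section
/- Let M be a measurable space with a σ-finite measure μ, t₁ < T real numbers, ψ : [t₁, T) × M → ℝ and g : [t₁, T) × M → ℝ measurable, with g(·,x) positive, differentiable in t, satisfying ∂g/∂t (t,x) = -2·exp(ψ(t,x))·H(t,x)·g(t,x) where H(t,x) ≥ ε₀ > 0 for all (t,x). Assume ∫_M √(g(t₁,x)) dμ(x) < ∞ and appropriate integrability so that Fubini applies. Then ∫_{t₁}^{T} ∫_M exp(ψ(t,x))·√(g(t,x)) dμ(x) dt ≤ (1/ε₀)·∫_M √(g(t₁,x)) dμ(x). -/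
open Real MeasureTheory Set

/-!
Along each fibre `t ↦ (t, x)` the evolution equation makes `√g` decrease at rate
`e^ψ H √g ≥ ε₀ e^ψ √g`, so `∫ e^ψ √g dt` is at most the total decrease of `√g / ε₀`, hence
at most `√g(t₁) / ε₀`. Integrating over `M` with Fubini gives the volume bound.
-/

theorem HasDerivAt.sqrt_of_eq_mul {g : ℝ → ℝ} {k t : ℝ} (hg : HasDerivAt g (k * g t) t)
    (hpos : 0 < g t) : HasDerivAt (fun s => √(g s)) (k / 2 * √(g t)) t := by
  convert hg.sqrt hpos.ne' using 1
  have hsqrt : √(g t) ≠ 0 := (sqrt_pos.2 hpos).ne'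
  field_simp
  rw [sq_sqrt hpos.le]

theorem setIntegral_Ico_le_of_le_neg_deriv {f u u' : ℝ → ℝ} {a b : ℝ} (hab : a < b)
    (hu : ∀ t ∈ Ico a b, HasDerivAt u (u' t) t) (hu_nonneg : ∀ t ∈ Ico a b, 0 ≤ u t)
    (hfu : ∀ t ∈ Ico a b, f t ≤ -u' t) (hf : IntegrableOn f (Ico a b)) :
    ∫ t in Ico a b, f t ≤ u a := by
  have hf_Icc : IntegrableOn f (Icc a b) := by
    rwa [integrableOn_Icc_iff_integrableOn_Ico]
  have hpartial : ∀ s ∈ Ico a b, ∫ t in a..s, f t ≤ u a := by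
    intro s hs
    have hsub : Icc a s ⊆ Ico a b := Icc_subset_Ico_right hs.2
    have hFTC := intervalIntegral.integral_le_sub_of_hasDeriv_right_of_le (g := -u) (g' := -u')
      hs.1 (fun t ht => (hu t (hsub ht)).continuousAt.continuousWithinAt.neg)
      (fun t ht => (hu t (hsub (Ioo_subset_Icc_self ht))).neg.hasDerivWithinAt)
      (hf_Icc.mono_set (hsub.trans Ico_subset_Icc_self))
      (fun t ht => hfu t (hsub (Ioo_subset_Icc_self ht)))
    simp only [Pi.neg_apply] at hFTC
    linarith [hu_nonneg s hs]
  have hprimitive : ContinuousOn (fun s => ∫ t in a..s, f t) (closure (Ico a b)) := by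
    rw [closure_Ico hab.ne, ← uIcc_of_le hab.le]
    exact intervalIntegral.continuousOn_primitive_interval (by rwa [uIcc_of_le hab.le])
  calc ∫ t in Ico a b, f t = ∫ t in a..b, f t := by
        rw [intervalIntegral.integral_of_le hab.le, integral_Ico_eq_integral_Ioo,
          integral_Ioc_eq_integral_Ioo]
    _ ≤ u a := le_on_closure hpartial hprimitive continuousOn_const
        (by rw [closure_Ico hab.ne]; exact right_mem_Icc.2 hab.le)

theorem setIntegral_exp_mul_sqrt_le {ψ H g : ℝ → ℝ} {a b ε : ℝ} (hab : a < b) (hε : 0 < ε)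
    (hg_pos : ∀ t ∈ Ico a b, 0 < g t) (hH : ∀ t ∈ Ico a b, ε ≤ H t)
    (hg : ∀ t ∈ Ico a b, HasDerivAt g (-2 * exp (ψ t) * H t * g t) t)
    (hint : IntegrableOn (fun t => exp (ψ t) * √(g t)) (Ico a b)) :
    ∫ t in Ico a b, exp (ψ t) * √(g t) ≤ 1 / ε * √(g a) := by
  refine setIntegral_Ico_le_of_le_neg_deriv (u := fun t => 1 / ε * √(g t)) hab
    (fun t ht => ((hg t ht).sqrt_of_eq_mul (hg_pos t ht)).const_mul (1 / ε))
    (fun t _ => by positivity) (fun t ht => ?_) hint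
  rw [show -(1 / ε * (-2 * exp (ψ t) * H t / 2 * √(g t))) = H t / ε * (exp (ψ t) * √(g t)) by
    ring]
  exact le_mul_of_one_le_left (by positivity) ((one_le_div hε).2 (hH t ht))

theorem volume_estimate_cylinder_general
    {M : Type*} [MeasurableSpace M] (μ : Measure M) [SigmaFinite μ]
    (t₁ T ε₀ : ℝ) (g ψ H : ℝ → M → ℝ)
    (hT : t₁ < T) (hε : 0 < ε₀)
    (hgpos : ∀ t ∈ Ico t₁ T, ∀ x, 0 < g t x)
    (hHε : ∀ t ∈ Ico t₁ T, ∀ x, ε₀ ≤ H t x)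
    (hg' : ∀ t ∈ Ico t₁ T, ∀ x,
      HasDerivAt (fun s => g s x) (-2 * Real.exp (ψ t x) * H t x * g t x) t)
    (hinit : Integrable (fun x => Real.sqrt (g t₁ x)) μ)
    (hfubini : Integrable (fun p : ℝ × M => Real.exp (ψ p.1 p.2) * Real.sqrt (g p.1 p.2))
      ((volume.restrict (Ico t₁ T)).prod μ)) :
    ∫ t in Ico t₁ T, ∫ x, Real.exp (ψ t x) * Real.sqrt (g t x) ∂μ
      ≤ (1 / ε₀) * ∫ x, Real.sqrt (g t₁ x) ∂μ := by
  calc ∫ t in Ico t₁ T, ∫ x, exp (ψ t x) * √(g t x) ∂μ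
      = ∫ x, (∫ t in Ico t₁ T, exp (ψ t x) * √(g t x)) ∂μ := integral_integral_swap hfubini
    _ ≤ ∫ x, 1 / ε₀ * √(g t₁ x) ∂μ := by
        refine integral_mono_ae hfubini.swap.integral_prod_left (hinit.const_mul _) ?_
        filter_upwards [hfubini.swap.prod_right_ae] with x hx
        exact setIntegral_exp_mul_sqrt_le hT hε (fun t ht => hgpos t ht x)
          (fun t ht => hHε t ht x) (fun t ht => hg' t ht x) hx
    _ = 1 / ε₀ * ∫ x, √(g t₁ x) ∂μ := integral_const_mul _ _

theorem volume_estimate_cylinder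
    {M : Type*} [MeasurableSpace M] (μ : Measure M) [SigmaFinite μ]
    (t₁ T ε₀ : ℝ) (g ψ H : ℝ → M → ℝ)
    (hT : t₁ < T) (hε : 0 < ε₀)
    (hmeasg : Measurable (fun p : ℝ × M => g p.1 p.2))
    (hmeasψ : Measurable (fun p : ℝ × M => ψ p.1 p.2))
    (hgpos : ∀ t ∈ Ico t₁ T, ∀ x, 0 < g t x)
    (hHε : ∀ t ∈ Ico t₁ T, ∀ x, ε₀ ≤ H t x)
    (hg' : ∀ t ∈ Ico t₁ T, ∀ x,
      HasDerivAt (fun s => g s x) (-2 * Real.exp (ψ t x) * H t x * g t x) t)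
    (hinit : Integrable (fun x => Real.sqrt (g t₁ x)) μ)
    (hfubini : Integrable (fun p : ℝ × M => Real.exp (ψ p.1 p.2) * Real.sqrt (g p.1 p.2))
      ((volume.restrict (Ico t₁ T)).prod μ)) :
    ∫ t in Ico t₁ T, ∫ x, Real.exp (ψ t x) * Real.sqrt (g t x) ∂μ
      ≤ (1 / ε₀) * ∫ x, Real.sqrt (g t₁ x) ∂μ :=
  volume_estimate_cylinder_general μ t₁ T ε₀ g ψ H hT hε hgpos hHε hg' hinit hfubini
end

section
/- Let g : [t₁, T) → ℝ be positive and differentiable with g'(t) = 2·exp(ψ(t))·H(t)·g(t) where H(t) ≤ -ε₀ < 0 and ψ is continuous. Then for every T' ∈ [t₁, T), ∫_{t₁}^{T'} exp(ψ(t))·√(g(t)) dt ≤ (1/ε₀)·√(g(t₁)). -/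
/-!
Since `g' = 2 e^ψ H g`, the square root `√g` satisfies `(√g)' = e^ψ H √g ≤ -ε₀ e^ψ √g`.
Hence `e^ψ √g ≤ -(√g)' / ε₀`, and integrating gives
`∫ e^ψ √g ≤ (√g(t₁) - √g(T')) / ε₀ ≤ √g(t₁) / ε₀`.
The integration uses the one-sided form of the fundamental theorem of calculus, which needs
integrability of `e^ψ √g` only, not of `(√g)'`.
-/

open Real Set MeasureTheory intervalIntegral

theorem HasDerivAt.sqrt_of_eq_mul_self {g : ℝ → ℝ} {c x : ℝ}
    (hg : HasDerivAt g (c * g x) x) (hx : 0 < g x) :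
    HasDerivAt (fun t => √(g t)) (c / 2 * √(g x)) x := by
  convert hg.sqrt hx.ne' using 1
  rw [eq_div_iff (by positivity)]
  linear_combination c * mul_self_sqrt hx.le

theorem integral_le_one_div_mul_of_hasDerivAt_le_neg_mul {a b ε : ℝ} {φ u u' : ℝ → ℝ}
    (hab : a ≤ b) (hε : 0 < ε) (hu : ContinuousOn u (Icc a b))
    (hderiv : ∀ x ∈ Ioo a b, HasDerivAt u (u' x) x) (hφ : IntegrableOn φ (Icc a b))
    (hle : ∀ x ∈ Ioo a b, u' x ≤ -ε * φ x) (hub : 0 ≤ u b) :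
    ∫ x in a..b, φ x ≤ 1 / ε * u a := by
  have hdecrease : ∫ x in a..b, φ x ≤ -u b / ε - -u a / ε :=
    integral_le_sub_of_hasDeriv_right_of_le hab (hu.neg.div_const ε)
      (fun x hx => ((hderiv x hx).neg.div_const ε).hasDerivWithinAt) hφ
      (fun x hx => (le_div_iff₀ hε).2 (by linarith [hle x hx]))
  calc ∫ x in a..b, φ x ≤ -u b / ε - -u a / ε := hdecrease
    _ ≤ 1 / ε * u a := by
      rw [one_div_mul_eq_div, ← sub_nonneg]
      field_simp
      linarith

theorem riemannian_volume_estimate_pointwise_general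
    (t₁ T ε₀ : ℝ) (g ψ H : ℝ → ℝ)
    (hε : 0 < ε₀)
    (hgpos : ∀ t ∈ Ico t₁ T, 0 < g t)
    (hψ : ContinuousOn ψ (Ico t₁ T))
    (hHneg : ∀ t ∈ Ico t₁ T, H t ≤ -ε₀)
    (hg' : ∀ t ∈ Ico t₁ T, HasDerivAt g (2 * Real.exp (ψ t) * H t * g t) t) :
    ∀ T' ∈ Ico t₁ T,
      ∫ t in t₁..T', Real.exp (ψ t) * Real.sqrt (g t) ≤ (1 / ε₀) * Real.sqrt (g t₁) := by
  rintro T' ⟨hT'₁, hT'₂⟩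
  have hsub : Icc t₁ T' ⊆ Ico t₁ T := Icc_subset_Ico_right hT'₂
  have hinner : ∀ x ∈ Ioo t₁ T', x ∈ Ico t₁ T := fun x hx => hsub (Ioo_subset_Icc_self hx)
  have hg : ContinuousOn g (Icc t₁ T') := fun x hx =>
    (hg' x (hsub hx)).continuousAt.continuousWithinAt
  have hsqrt : ContinuousOn (fun t => √(g t)) (Icc t₁ T') := continuous_sqrt.comp_continuousOn hg
  refine integral_le_one_div_mul_of_hasDerivAt_le_neg_mul hT'₁ hε hsqrt
    (fun x hx => (hg' x (hinner x hx)).sqrt_of_eq_mul_self (hgpos x (hinner x hx)))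
    (((continuous_exp.comp_continuousOn (hψ.mono hsub)).mul hsqrt).integrableOn_compact
      isCompact_Icc) (fun x hx => ?_) (sqrt_nonneg _)
  calc 2 * exp (ψ x) * H x / 2 * √(g x) = H x * (exp (ψ x) * √(g x)) := by ring
    _ ≤ -ε₀ * (exp (ψ x) * √(g x)) :=
      mul_le_mul_of_nonneg_right (hHneg x (hinner x hx)) (by positivity)

theorem riemannian_volume_estimate_pointwise
    (t₁ T ε₀ : ℝ) (g ψ H : ℝ → ℝ)
    (hT : t₁ < T) (hε : 0 < ε₀)
    (hgpos : ∀ t ∈ Ico t₁ T, 0 < g t)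
    (hψ : ContinuousOn ψ (Ico t₁ T))
    (hHneg : ∀ t ∈ Ico t₁ T, H t ≤ -ε₀)
    (hg' : ∀ t ∈ Ico t₁ T, HasDerivAt g (2 * Real.exp (ψ t) * H t * g t) t) :
    ∀ T' ∈ Ico t₁ T,
      ∫ t in t₁..T', Real.exp (ψ t) * Real.sqrt (g t) ≤ (1 / ε₀) * Real.sqrt (g t₁) :=
  riemannian_volume_estimate_pointwise_general t₁ T ε₀ g ψ H hε hgpos hψ hHneg hg'
end

section
/- Let g : [t₁, T) → ℝ be positive and differentiable with g'(t) = 2·exp(ψ(t))·H(t)·g(t) where H(t) ≥ ε₀ > 0 and ψ continuous, and suppose L = lim_{t→T⁻} √(g(t)) exists and is finite. Then ∫_{t₁}^{T} exp(ψ(t))·√(g(t)) dt ≤ (1/ε₀)·L. -/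
open Real Set Filter MeasureTheory

set_option maxHeartbeats 1000000 in
theorem riemannian_volume_estimate_limit
    (t₁ T ε₀ L : ℝ) (g ψ H : ℝ → ℝ)
    (hT : t₁ < T) (hε : 0 < ε₀)
    (hgpos : ∀ t ∈ Ico t₁ T, 0 < g t)
    (hψ : ContinuousOn ψ (Ico t₁ T))
    (hHε : ∀ t ∈ Ico t₁ T, ε₀ ≤ H t)
    (hg' : ∀ t ∈ Ico t₁ T, HasDerivAt g (2 * Real.exp (ψ t) * H t * g t) t)
    (hlim : Tendsto (fun t => Real.sqrt (g t)) (nhdsWithin T (Iio T)) (nhds L)) :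
    ∫ t in Ico t₁ T, Real.exp (ψ t) * Real.sqrt (g t) ≤ (1 / ε₀) * L := by
  set f' : ℝ → ℝ := fun t => Real.exp (ψ t) * H t * Real.sqrt (g t) with hf'
  set F : ℝ → ℝ := fun t => if t < T then Real.sqrt (g t) else L with hFdef
  have hFT : F T = L := by simp [hFdef]
  -- derivative of sqrt ∘ g on Ico
  have hd : ∀ x ∈ Ico t₁ T, HasDerivAt (fun t => Real.sqrt (g t)) (f' x) x := by
    intro x hx
    have hgx := hgpos x hx
    have hs : Real.sqrt (g x) ≠ 0 := (Real.sqrt_pos.mpr hgx).ne'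
    have h := (hg' x hx).sqrt hgx.ne'
    have key : (2 * Real.exp (ψ x) * H x * g x) / (2 * Real.sqrt (g x)) = f' x := by
      rw [hf']
      rw [div_eq_iff (by positivity : (2:ℝ) * Real.sqrt (g x) ≠ 0)]
      have hms : Real.sqrt (g x) * Real.sqrt (g x) = g x := Real.mul_self_sqrt hgx.le
      linear_combination (-(2 * Real.exp (ψ x) * H x)) * hms
    rw [← key]
    exact h
  -- F agrees with sqrt ∘ g near any x < T
  have hFeq : ∀ x : ℝ, x < T → F =ᶠ[nhds x] fun t => Real.sqrt (g t) := by
    intro x hx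
    filter_upwards [Iio_mem_nhds hx] with y hy
    show (if y < T then Real.sqrt (g y) else L) = Real.sqrt (g y)
    exact if_pos hy
  have hFd : ∀ x ∈ Ioo t₁ T, HasDerivAt F (f' x) x := by
    intro x hx
    exact (hd x ⟨hx.1.le, hx.2⟩).congr_of_eventuallyEq (hFeq x hx.2)
  -- continuity of F on Icc
  have hFcont : ContinuousOn F (Icc t₁ T) := by
    intro x hx
    rcases eq_or_lt_of_le hx.2 with rfl | hxT
    · -- at the right endpoint
      have h1 : Tendsto F (nhdsWithin x (Iio x)) (nhds L) := by
        apply hlim.congr'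
        filter_upwards [self_mem_nhdsWithin] with y hy
        show Real.sqrt (g y) = (if y < x then Real.sqrt (g y) else L)
        exact (if_pos hy).symm
      have h2 : Tendsto F (nhdsWithin x ({x} : Set ℝ)) (nhds L) := by
        rw [nhdsWithin_singleton]
        rw [tendsto_pure_left]
        intro s hs
        rw [hFT]
        exact mem_of_mem_nhds hs
      have h3 : Tendsto F (nhdsWithin x (Iio x ∪ {x})) (nhds L) := by
        rw [nhdsWithin_union]
        exact Tendsto.sup h1 h2
      have hsub : Icc t₁ x ⊆ Iio x ∪ {x} := by
        intro y hy
        rcases eq_or_lt_of_le hy.2 with rfl | h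
        · exact Or.inr rfl
        · exact Or.inl h
      rw [ContinuousWithinAt, hFT]
      exact h3.mono_left (nhdsWithin_mono _ hsub)
    · -- interior / left endpoint
      have hc : ContinuousAt (fun t => Real.sqrt (g t)) x :=
        Real.continuous_sqrt.continuousAt.comp (hg' x ⟨hx.1, hxT⟩).continuousAt
      exact (hc.congr (hFeq x hxT).symm).continuousWithinAt
  have hf'nonneg : ∀ x ∈ Ioo t₁ T, 0 ≤ f' x := by
    intro x hx
    have hH : 0 < H x := lt_of_lt_of_le hε (hHε x ⟨hx.1.le, hx.2⟩)
    show 0 ≤ Real.exp (ψ x) * H x * Real.sqrt (g x)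
    have := Real.sqrt_nonneg (g x)
    have := (Real.exp_pos (ψ x)).le
    positivity
  have hintIoc : IntegrableOn f' (Ioc t₁ T) volume :=
    intervalIntegral.integrableOn_deriv_of_nonneg hFcont hFd hf'nonneg
  have hint : IntegrableOn f' (Ioo t₁ T) volume :=
    hintIoc.mono_set Ioo_subset_Ioc_self
  have hii : IntervalIntegrable f' volume t₁ T := by
    rw [intervalIntegrable_iff_integrableOn_Ioo_of_le hT.le]
    exact hint
  have hftc : ∫ y in t₁..T, f' y = L - Real.sqrt (g t₁) := by
    rw [intervalIntegral.integral_eq_sub_of_hasDeriv_right_of_le hT.le hFcont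
      (fun x hx => (hFd x hx).hasDerivWithinAt) hii, hFT]
    have : F t₁ = Real.sqrt (g t₁) := by simp [hFdef, hT]
    rw [this]
  have hIoo : ∫ t in Ioo t₁ T, f' t = L - Real.sqrt (g t₁) := by
    have h1 : ∫ t in Ioo t₁ T, f' t = ∫ t in Ioc t₁ T, f' t :=
      integral_Ioc_eq_integral_Ioo.symm
    have h2 : ∫ t in Ioc t₁ T, f' t = ∫ y in t₁..T, f' y :=
      (intervalIntegral.integral_of_le hT.le).symm
    exact h1.trans (h2.trans hftc)
  -- the integrand G
  set G : ℝ → ℝ := fun t => Real.exp (ψ t) * Real.sqrt (g t) with hG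
  have hGle : ∀ x ∈ Ioo t₁ T, G x ≤ (1 / ε₀) * f' x := by
    intro x hx
    have hH := hHε x ⟨hx.1.le, hx.2⟩
    have hs : 0 ≤ Real.sqrt (g x) := Real.sqrt_nonneg _
    have he : 0 < Real.exp (ψ x) := Real.exp_pos _
    show Real.exp (ψ x) * Real.sqrt (g x) ≤ (1 / ε₀) * (Real.exp (ψ x) * H x * Real.sqrt (g x))
    rw [div_mul_eq_mul_div, one_mul, le_div_iff₀ hε]
    nlinarith [mul_le_mul_of_nonneg_left hH (mul_nonneg he.le hs)]
  have hGcont : ContinuousOn G (Ioo t₁ T) := by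
    apply ContinuousOn.mul
    · exact Real.continuous_exp.comp_continuousOn (hψ.mono Ioo_subset_Ico_self)
    · apply Real.continuous_sqrt.comp_continuousOn
      intro x hx
      exact ((hg' x ⟨hx.1.le, hx.2⟩).continuousAt).continuousWithinAt
  have hGmeas : AEStronglyMeasurable G (volume.restrict (Ioo t₁ T)) :=
    hGcont.aestronglyMeasurable measurableSet_Ioo
  have hGnonneg : ∀ x ∈ Ioo t₁ T, 0 ≤ G x := fun x hx => by
    show 0 ≤ Real.exp (ψ x) * Real.sqrt (g x)
    have := Real.sqrt_nonneg (g x); have := (Real.exp_pos (ψ x)).le; positivity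
  have hGint : IntegrableOn G (Ioo t₁ T) volume := by
    apply Integrable.mono' (hint.const_mul (1 / ε₀)) hGmeas
    filter_upwards [ae_restrict_mem measurableSet_Ioo] with x hx
    rw [Real.norm_of_nonneg (hGnonneg x hx)]
    exact hGle x hx
  calc ∫ t in Ico t₁ T, G t = ∫ t in Ioo t₁ T, G t := integral_Ico_eq_integral_Ioo
    _ ≤ ∫ t in Ioo t₁ T, (1 / ε₀) * f' t := by
        apply setIntegral_mono_on hGint (hint.const_mul (1 / ε₀)) measurableSet_Ioo hGle
    _ = (1 / ε₀) * (L - Real.sqrt (g t₁)) := by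
        rw [integral_const_mul, hIoo]
    _ ≤ (1 / ε₀) * L := by
        have hs : 0 ≤ Real.sqrt (g t₁) := Real.sqrt_nonneg _
        have : 0 < 1 / ε₀ := by positivity
        nlinarith
end
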